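/- arXiv:1811.08497 — 3 statements merged into one kernel-verified Lean document; each statement's English description precedes it below -/
import Mathlib

section
/- Let k be a real number, let A : ℝ → M₂(ℝ) and G : ℝ → M₂(ℝ) with A differentiable at t, suppose trace(G(t)) = 0, and suppose A′(t) = G(t)·A(t) + A(t)·G(t)ᵀ − 2(G(t):A(t))·A(t) − 2k(2A(t) − I₂). Then the function s ↦ det(A(s)) is differentiable at t and its derivative equals −4((G(t):A(t)) + 2k)·det A(t) + 2k·trace A(t). -/
open Matrix

/-- The Frobenius inner product of two real 2×2 matrices: `G:A = ∑ᵢⱼ Gᵢⱼ Aᵢⱼ`. -/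
def frob (G A : Matrix (Fin 2) (Fin 2) ℝ) : ℝ := ∑ i, ∑ j, G i j * A i j

/-!
By Jacobi's formula, `(det A)′ = trace (adj A · A′)`. Since `adj A · A = A · adj A = det A · I`,
cyclicity of the trace turns the transport terms `G A + A Gᵀ` into `2 trace G · det A = 0`,
the term `A` into `2 det A`, and `I` into `trace (adj A) = trace A`.
-/

namespace Matrix

variable {n R : Type*} [Fintype n] [DecidableEq n] [CommRing R]

theorem trace_adjugate_mul_mul_self (A B : Matrix n n R) :
    trace (adjugate A * (B * A)) = A.det * trace B := by
  rw [trace_mul_comm, mul_assoc, mul_adjugate, mul_smul_one, trace_smul, smul_eq_mul]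

theorem trace_adjugate_mul_self_mul (A B : Matrix n n R) :
    trace (adjugate A * (A * B)) = A.det * trace B := by
  rw [← mul_assoc, adjugate_mul, smul_one_mul, trace_smul, smul_eq_mul]

theorem trace_adjugate_mul_self (A : Matrix n n R) :
    trace (adjugate A * A) = A.det * Fintype.card n := by
  rw [adjugate_mul, trace_smul, trace_one, smul_eq_mul]

theorem trace_adjugate_fin_two (A : Matrix (Fin 2) (Fin 2) R) :
    trace (adjugate A) = trace A := by
  simp only [adjugate_fin_two, trace_fin_two, of_apply, cons_val', cons_val_zero, cons_val_one,
    empty_val', cons_val_fin_one]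
  ring

end Matrix

theorem hasDerivAt_det_fin_two {𝕜 : Type*} [NontriviallyNormedField 𝕜]
    {A : 𝕜 → Matrix (Fin 2) (Fin 2) 𝕜} {A' : Matrix (Fin 2) (Fin 2) 𝕜} {t : 𝕜}
    (hA : ∀ i j, HasDerivAt (fun s => A s i j) (A' i j) t) :
    HasDerivAt (fun s => (A s).det) (trace (adjugate (A t) * A')) t := by
  simp only [det_fin_two]
  refine (((hA 0 0).mul (hA 1 1)).sub ((hA 0 1).mul (hA 1 0))).congr_deriv ?_
  simp only [adjugate_fin_two, trace_fin_two, mul_apply, Fin.sum_univ_two, of_apply, cons_val',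
    cons_val_zero, cons_val_one, empty_val', cons_val_fin_one]
  ring

/-- If `A : ℝ → M₂(ℝ)` is differentiable at `t` with
`A′(t) = G(t)·A(t) + A(t)·G(t)ᵀ − 2(G(t):A(t))·A(t) − 2k(2A(t) − I₂)` (entrywise),
and `trace G(t) = 0`, then `s ↦ det A(s)` is differentiable at `t` with derivative
`−4((G(t):A(t)) + 2k)·det A(t) + 2k·trace A(t)`. -/
theorem det_evolution_DA (k : ℝ) (A G : ℝ → Matrix (Fin 2) (Fin 2) ℝ) (t : ℝ)
    (hG : (G t).trace = 0)
    (hA : ∀ i j, HasDerivAt (fun s => A s i j)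
      ((G t * A t + A t * (G t)ᵀ - (2 * frob (G t) (A t)) • A t
        - (2 * k) • ((2 : ℝ) • A t - 1)) i j) t) :
    HasDerivAt (fun s => (A s).det)
      (-4 * (frob (G t) (A t) + 2 * k) * (A t).det + 2 * k * (A t).trace) t := by
  refine (hasDerivAt_det_fin_two hA).congr_deriv ?_
  simp only [mul_add, mul_sub, Matrix.mul_smul, mul_one, trace_add, trace_sub, trace_smul,
    smul_eq_mul, trace_adjugate_mul_mul_self, trace_adjugate_mul_self_mul, trace_transpose, hG,
    trace_adjugate_mul_self, Fintype.card_fin, trace_adjugate_fin_two]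
  ring
end

section
/- Let u : ℝ² → ℝ² be smooth, ℤ²-periodic, and divergence-free (∂₁u₁ + ∂₂u₂ = 0), let h : ℝ² → ℝ be smooth and ℤ²-periodic, and let m ∈ ℝ² be a fixed unit vector. Set ω = ∂₁u₂ − ∂₂u₁ and q = ∑_{i,j} (∂_i u_j) m_i m_j. Then ∫_{[0,1]²} ω · ∇^⊥·( ∇·( q·h·(m ⊗ m) ) ) dx = ∫_{[0,1]²} Δq · q · h dx. -/
open Matrix MeasureTheory

/-- The partial derivative `∂ₖ f` of a function `f : ℝ² → ℝ`. -/
noncomputable def pd (k : Fin 2) (f : (Fin 2 → ℝ) → ℝ) : (Fin 2 → ℝ) → ℝ :=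
  fun x => fderiv ℝ f x (Pi.single k 1)

/-- The Laplacian `Δf = ∂₁²f + ∂₂²f` of a function `f : ℝ² → ℝ`. -/
noncomputable def lap (f : (Fin 2 → ℝ) → ℝ) : (Fin 2 → ℝ) → ℝ :=
  fun x => ∑ k, pd k (pd k f) x

/-- `∇^⊥·(∇·σ)` for a matrix field `σ : ℝ² → M₂(ℝ)`, where `(∇·σ)ᵢ = ∑ⱼ ∂ⱼσⱼᵢ`
and `∇^⊥·v = ∂₁v₂ − ∂₂v₁`. -/
noncomputable def perpDivDiv (σ : (Fin 2 → ℝ) → Matrix (Fin 2) (Fin 2) ℝ) :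
    (Fin 2 → ℝ) → ℝ :=
  fun x => pd 0 (fun y => ∑ j, pd j (fun z => σ z j 1) y) x
    - pd 1 (fun y => ∑ j, pd j (fun z => σ z j 0) y) x

/-- `q = (∇u) : m⊗m = ∑ᵢⱼ (∂ᵢuⱼ) mᵢ mⱼ`. -/
noncomputable def qf (u : (Fin 2 → ℝ) → Fin 2 → ℝ) (m : Fin 2 → ℝ) : (Fin 2 → ℝ) → ℝ :=
  fun x => ∑ i, ∑ j, pd i (fun y => u y j) x * m i * m j

set_option linter.unusedSectionVars false
set_option linter.unusedVariables false

def Per (f : (Fin 2 → ℝ) → ℝ) : Prop :=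
  ∀ (x : Fin 2 → ℝ) (n : Fin 2 → ℤ), f (x + fun k => (n k : ℝ)) = f x

lemma Per.mul {f g : (Fin 2 → ℝ) → ℝ} (hf : Per f) (hg : Per g) :
    Per fun x => f x * g x := fun x n => by simp [hf x n, hg x n]

lemma Per.cmul {f : (Fin 2 → ℝ) → ℝ} (c : ℝ) (hf : Per f) :
    Per fun x => c * f x := fun x n => by simp [hf x n]

lemma Per.add {f g : (Fin 2 → ℝ) → ℝ} (hf : Per f) (hg : Per g) :
    Per fun x => f x + g x := fun x n => by simp [hf x n, hg x n]

lemma pd_contDiff {f : (Fin 2 → ℝ) → ℝ} (hf : ContDiff ℝ (⊤ : ℕ∞) f) (k : Fin 2) :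
    ContDiff ℝ (⊤ : ℕ∞) (pd k f) :=
  (hf.fderiv_right (by simp)).clm_apply contDiff_const

lemma Per.pd {f : (Fin 2 → ℝ) → ℝ} (hf : ContDiff ℝ (⊤ : ℕ∞) f) (hp : Per f) (k : Fin 2) :
    Per (pd k f) := by
  intro x n
  set c : Fin 2 → ℝ := fun k => (n k : ℝ) with hc
  have h1 : HasFDerivAt (fun y => f (y + c)) (fderiv ℝ f (x + c)) x := by
    have := ((hf.differentiable (by simp) (x + c)).hasFDerivAt).comp x
      ((hasFDerivAt_id x).add_const c)
    simpa [Function.comp_def] using this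
  have h2 : (fun y => f (y + c)) = f := funext fun y => hp y n
  rw [h2] at h1
  show fderiv ℝ f (x + c) (Pi.single k 1) = fderiv ℝ f x (Pi.single k 1)
  rw [h1.fderiv]

lemma pd_comm {f : (Fin 2 → ℝ) → ℝ} (hf : ContDiff ℝ (⊤ : ℕ∞) f) (i j : Fin 2) (x : Fin 2 → ℝ) :
    pd i (pd j f) x = pd j (pd i f) x := by
  have hd1 : Differentiable ℝ (fderiv ℝ f) :=
    (hf.fderiv_right (m := (⊤ : ℕ∞)) (by simp)).differentiable (by simp)
  have h1 : HasFDerivAt (fderiv ℝ f) (fderiv ℝ (fderiv ℝ f) x) x := (hd1 x).hasFDerivAt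
  have key : ∀ v : Fin 2 → ℝ, HasFDerivAt (fun y => fderiv ℝ f y v)
      ((ContinuousLinearMap.apply ℝ ℝ v).comp (fderiv ℝ (fderiv ℝ f) x)) x :=
    fun v => ((ContinuousLinearMap.apply ℝ ℝ v).hasFDerivAt).comp x h1
  have sym := second_derivative_symmetric_of_eventually
    (Filter.Eventually.of_forall fun y => (hf.differentiable (by simp) y).hasFDerivAt) h1
    (Pi.single i 1) (Pi.single j (1:ℝ))
  have e1 : pd j f = fun y => fderiv ℝ f y (Pi.single j 1) := rfl
  have e2 : pd i f = fun y => fderiv ℝ f y (Pi.single i 1) := rfl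
  simp only [pd, e1, e2, (key (Pi.single j 1)).fderiv, (key (Pi.single i 1)).fderiv,
    ContinuousLinearMap.coe_comp', Function.comp_apply, ContinuousLinearMap.apply_apply]
  exact sym

lemma pd_mul {f g : (Fin 2 → ℝ) → ℝ} (hf : ContDiff ℝ (⊤ : ℕ∞) f) (hg : ContDiff ℝ (⊤ : ℕ∞) g) (k : Fin 2) :
    ∀ x, pd k (fun x => f x * g x) x = pd k f x * g x + f x * pd k g x := by
  intro x
  have := fderiv_fun_mul (𝕜 := ℝ) (hf.differentiable (by simp) x)
    (hg.differentiable (by simp) x)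
  simp only [pd, this, ContinuousLinearMap.add_apply, ContinuousLinearMap.smul_apply,
    smul_eq_mul]
  ring

lemma pd_cmul {g : (Fin 2 → ℝ) → ℝ} (hg : ContDiff ℝ (⊤ : ℕ∞) g) (c : ℝ) (k : Fin 2) :
    ∀ x, pd k (fun x => c * g x) x = c * pd k g x := by
  intro x
  have := fderiv_const_mul (𝕜 := ℝ) (hg.differentiable (by simp) x) c
  simp only [pd, this, ContinuousLinearMap.smul_apply, smul_eq_mul]

lemma pd_add {f g : (Fin 2 → ℝ) → ℝ} (hf : ContDiff ℝ (⊤ : ℕ∞) f) (hg : ContDiff ℝ (⊤ : ℕ∞) g) (k : Fin 2) :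
    ∀ x, pd k (fun x => f x + g x) x = pd k f x + pd k g x := by
  intro x
  have := fderiv_fun_add (𝕜 := ℝ) (hf.differentiable (by simp) x)
    (hg.differentiable (by simp) x)
  simp only [pd, this, ContinuousLinearMap.add_apply]

lemma pd_neg (g : (Fin 2 → ℝ) → ℝ) (k : Fin 2) :
    ∀ x, pd k (fun x => -(g x)) x = -(pd k g x) := by
  intro x
  simp only [pd, fderiv_fun_neg, ContinuousLinearMap.neg_apply]

lemma insertNth_one_eq (k : Fin 2) (x : Fin 1 → ℝ) :
    Fin.insertNth k (1:ℝ) x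
      = Fin.insertNth k (0:ℝ) x + fun j => (((Pi.single k 1 : Fin 2 → ℤ)) j : ℝ) := by
  funext j
  refine Fin.succAboveCases k ?_ ?_ j
  · simp [Pi.single_apply]
  · intro l
    simp [Fin.insertNth_apply_succAbove, Pi.single_apply, (Fin.succAbove_ne k l)]

lemma integral_pd_zero (G : (Fin 2 → ℝ) → ℝ) (hG : ContDiff ℝ (⊤ : ℕ∞) G) (hp : Per G) (k : Fin 2) :
    ∫ x in Set.Icc (0 : Fin 2 → ℝ) 1, pd k G x = 0 := by
  classical
  have hle : (0 : Fin 2 → ℝ) ≤ 1 := fun i => zero_le_one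
  set f : Fin 2 → (Fin 2 → ℝ) → ℝ := fun i => if i = k then G else fun _ => 0 with hfdef
  set f' : Fin 2 → (Fin 2 → ℝ) → (Fin 2 → ℝ) →L[ℝ] ℝ :=
    fun i x => if i = k then fderiv ℝ G x else 0 with hf'def
  have hdivsum : ∀ x, (∑ i, f' i x (Pi.single i 1)) = pd k G x := by
    intro x
    simp only [hf'def]
    rw [Finset.sum_congr rfl (fun i _ =>
      apply_ite (fun L : (Fin 2 → ℝ) →L[ℝ] ℝ => L (Pi.single i 1)) (i = k) _ _)]
    simp [Finset.sum_ite_eq', pd]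
  have H := integral_divergence_of_hasFDerivAt_off_countable' (n := 1)
    (0 : Fin 2 → ℝ) 1 hle f f' ∅ Set.countable_empty
    (fun i => by
      by_cases hik : i = k
      · simpa [hfdef, hik] using hG.continuous.continuousOn
      · simpa [hfdef, hik] using continuousOn_const)
    (fun x _ i => by
      by_cases hik : i = k
      · simpa [hfdef, hf'def, hik] using (hG.differentiable (by simp) x).hasFDerivAt
      · simpa [hfdef, hf'def, hik] using hasFDerivAt_const (0:ℝ) x)
    (by
      have hc : Continuous (pd k G) := (pd_contDiff hG k).continuous
      have h2 : (fun x => ∑ i, f' i x (Pi.single i 1)) = pd k G := funext hdivsum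
      rw [h2]
      exact hc.continuousOn.integrableOn_compact isCompact_Icc)
  simp only [hdivsum] at H
  rw [H]
  apply Finset.sum_eq_zero
  intro i _
  by_cases hik : i = k
  · subst hik
    have : ∀ x : Fin 1 → ℝ, f i (Fin.insertNth i ((1 : Fin 2 → ℝ) i) x)
        = f i (Fin.insertNth i ((0 : Fin 2 → ℝ) i) x) := by
      intro x
      simp only [hfdef, if_pos rfl, Pi.one_apply, Pi.zero_apply, insertNth_one_eq]
      exact hp _ _
    simp only [this, sub_self]
  · simp [hfdef, hik]

lemma intOn {f : (Fin 2 → ℝ) → ℝ} (hf : Continuous f) :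
    IntegrableOn f (Set.Icc (0 : Fin 2 → ℝ) 1) volume :=
  hf.continuousOn.integrableOn_compact isCompact_Icc

lemma ibp {f g : (Fin 2 → ℝ) → ℝ} (hf : ContDiff ℝ (⊤ : ℕ∞) f) (hg : ContDiff ℝ (⊤ : ℕ∞) g)
    (hpf : Per f) (hpg : Per g) (k : Fin 2) :
    ∫ x in Set.Icc (0 : Fin 2 → ℝ) 1, f x * pd k g x
      = - ∫ x in Set.Icc (0 : Fin 2 → ℝ) 1, pd k f x * g x := by
  have h0 := integral_pd_zero (fun x => f x * g x) (hf.mul hg) (hpf.mul hpg) k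
  simp only [pd_mul hf hg k] at h0
  rw [integral_add (intOn (((pd_contDiff hf k).continuous).fun_mul hg.continuous))
    (intOn (hf.continuous.fun_mul (pd_contDiff hg k).continuous))] at h0
  linarith

lemma pd_sub {f g : (Fin 2 → ℝ) → ℝ} (hf : ContDiff ℝ (⊤ : ℕ∞) f) (hg : ContDiff ℝ (⊤ : ℕ∞) g) (k : Fin 2) :
    ∀ x, pd k (fun x => f x - g x) x = pd k f x - pd k g x := by
  intro x
  have := fderiv_fun_sub (𝕜 := ℝ) (hf.differentiable (by simp) x) (hg.differentiable (by simp) x)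
  simp only [pd, this, ContinuousLinearMap.sub_apply]

noncomputable def Uf (u : (Fin 2 → ℝ) → Fin 2 → ℝ) (m : Fin 2 → ℝ) : (Fin 2 → ℝ) → ℝ :=
  fun x => m 0 * u x 0 + m 1 * u x 1

noncomputable def DQ (u : (Fin 2 → ℝ) → Fin 2 → ℝ) (m : Fin 2 → ℝ) : (Fin 2 → ℝ) → ℝ :=
  fun x => m 0 * pd 0 (Uf u m) x + m 1 * pd 1 (Uf u m) x

noncomputable def Pf (u : (Fin 2 → ℝ) → Fin 2 → ℝ) (h : (Fin 2 → ℝ) → ℝ) (m : Fin 2 → ℝ) :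
    (Fin 2 → ℝ) → ℝ := fun x => DQ u m x * h x

noncomputable def Wf (u : (Fin 2 → ℝ) → Fin 2 → ℝ) (h : (Fin 2 → ℝ) → ℝ) (m : Fin 2 → ℝ) :
    (Fin 2 → ℝ) → ℝ := fun x => m 0 * pd 0 (Pf u h m) x + m 1 * pd 1 (Pf u h m) x

noncomputable def omg (u : (Fin 2 → ℝ) → Fin 2 → ℝ) : (Fin 2 → ℝ) → ℝ :=
  fun x => pd 0 (fun y => u y 1) x - pd 1 (fun y => u y 0) x

noncomputable def lapU (u : (Fin 2 → ℝ) → Fin 2 → ℝ) (m : Fin 2 → ℝ) : (Fin 2 → ℝ) → ℝ :=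
  fun x => pd 0 (pd 0 (Uf u m)) x + pd 1 (pd 1 (Uf u m)) x

section helpers

variable (u : (Fin 2 → ℝ) → Fin 2 → ℝ) (h : (Fin 2 → ℝ) → ℝ) (m : Fin 2 → ℝ)
variable (hu : ∀ j, ContDiff ℝ (⊤ : ℕ∞) fun x => u x j)
variable (huper : ∀ (x : Fin 2 → ℝ) (n : Fin 2 → ℤ) (j : Fin 2),
      u (x + fun k => (n k : ℝ)) j = u x j)
variable (hh : ContDiff ℝ (⊤ : ℕ∞) h)
variable (hhper : ∀ (x : Fin 2 → ℝ) (n : Fin 2 → ℤ), h (x + fun k => (n k : ℝ)) = h x)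

include hu in
lemma hUs : ContDiff ℝ (⊤ : ℕ∞) (Uf u m) :=
  (contDiff_const.mul (hu 0)).add (contDiff_const.mul (hu 1))

include huper in
lemma hUp : Per (Uf u m) :=
  Per.add (Per.cmul _ (fun x n => huper x n 0)) (Per.cmul _ (fun x n => huper x n 1))

include hu in
lemma pdU : ∀ (k : Fin 2) (x : Fin 2 → ℝ),
    pd k (Uf u m) x = m 0 * pd k (fun y => u y 0) x + m 1 * pd k (fun y => u y 1) x := by
  intro k x
  have e : Uf u m = fun x => (fun x => m 0 * u x 0) x + (fun x => m 1 * u x 1) x := rfl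
  rw [e, pd_add (contDiff_const.mul (hu 0)) (contDiff_const.mul (hu 1)) k x,
    pd_cmul (hu 0) (m 0) k x, pd_cmul (hu 1) (m 1) k x]

include hu in
lemma hDQs : ContDiff ℝ (⊤ : ℕ∞) (DQ u m) :=
  (contDiff_const.mul (pd_contDiff (hUs u m hu) 0)).add
    (contDiff_const.mul (pd_contDiff (hUs u m hu) 1))

include hu huper in
lemma hDQp : Per (DQ u m) :=
  Per.add (Per.cmul _ ((hUp u m huper).pd (hUs u m hu) 0))
    (Per.cmul _ ((hUp u m huper).pd (hUs u m hu) 1))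

include hu hh in
lemma hPs : ContDiff ℝ (⊤ : ℕ∞) (Pf u h m) := (hDQs u m hu).mul hh

include hu huper hh hhper in
lemma hPp : Per (Pf u h m) := Per.mul (hDQp u m hu huper) hhper

include hu hh in
lemma hWs : ContDiff ℝ (⊤ : ℕ∞) (Wf u h m) :=
  (contDiff_const.mul (pd_contDiff (hPs u h m hu hh) 0)).add
    (contDiff_const.mul (pd_contDiff (hPs u h m hu hh) 1))

include hu huper hh hhper in
lemma hWp : Per (Wf u h m) :=
  Per.add (Per.cmul _ ((hPp u h m hu huper hh hhper).pd (hPs u h m hu hh) 0))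
    (Per.cmul _ ((hPp u h m hu huper hh hhper).pd (hPs u h m hu hh) 1))

include hu in
lemma homgs : ContDiff ℝ (⊤ : ℕ∞) (omg u) :=
  (pd_contDiff (hu 1) 0).sub (pd_contDiff (hu 0) 1)

include hu huper in
lemma homgp : Per (omg u) := by
  intro x n
  have h1 := Per.pd (hu 1) (fun x n => huper x n 1) 0 x n
  have h0 := Per.pd (hu 0) (fun x n => huper x n 0) 1 x n
  simp only [omg, h1, h0]

include hu in
lemma hlapUs : ContDiff ℝ (⊤ : ℕ∞) (lapU u m) :=
  (pd_contDiff (pd_contDiff (hUs u m hu) 0) 0).add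
    (pd_contDiff (pd_contDiff (hUs u m hu) 1) 1)

include hu huper in
lemma hlapUp : Per (lapU u m) :=
  Per.add ((((hUp u m huper).pd (hUs u m hu) 0)).pd (pd_contDiff (hUs u m hu) 0) 0)
    ((((hUp u m huper).pd (hUs u m hu) 1)).pd (pd_contDiff (hUs u m hu) 1) 1)

include hu in
lemma qf_eq : qf u m = DQ u m := by
  funext x
  simp only [qf, Fin.sum_univ_two, DQ, pdU u m hu 0 x, pdU u m hu 1 x]
  ring

end helpers

section computations

variable (u : (Fin 2 → ℝ) → Fin 2 → ℝ) (h : (Fin 2 → ℝ) → ℝ) (m : Fin 2 → ℝ)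
variable (hu : ∀ j, ContDiff ℝ (⊤ : ℕ∞) fun x => u x j)
variable (hh : ContDiff ℝ (⊤ : ℕ∞) h)

include hu hh in
lemma perp_eq : ∀ x, perpDivDiv (fun z => (DQ u m z * h z) • vecMulVec m m) x
    = m 1 * pd 0 (Wf u h m) x - m 0 * pd 1 (Wf u h m) x := by
  intro x
  have hPs' := hPs u h m hu hh
  have hWs' := hWs u h m hu hh
  have hσ : ∀ i : Fin 2,
      (fun y => ∑ j, pd j (fun z => ((DQ u m z * h z) • vecMulVec m m : Matrix (Fin 2) (Fin 2) ℝ) j i) y)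
        = fun y => m i * Wf u h m y := by
    intro i
    funext y
    have hone : ∀ j : Fin 2,
        (fun z => ((DQ u m z * h z) • vecMulVec m m : Matrix (Fin 2) (Fin 2) ℝ) j i)
          = fun z => (m j * m i) * Pf u h m z := by
      intro j
      funext z
      simp only [Matrix.smul_apply, vecMulVec_apply, smul_eq_mul, Pf]
      ring
    rw [Fin.sum_univ_two, hone 0, hone 1,
      pd_cmul hPs' (m 0 * m i) 0 y, pd_cmul hPs' (m 1 * m i) 1 y]
    simp only [Wf]
    ring
  show pd 0 (fun y => ∑ j, pd j (fun z => ((DQ u m z * h z) • vecMulVec m m : Matrix (Fin 2) (Fin 2) ℝ) j 1) y) x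
    - pd 1 (fun y => ∑ j, pd j (fun z => ((DQ u m z * h z) • vecMulVec m m : Matrix (Fin 2) (Fin 2) ℝ) j 0) y) x
    = m 1 * pd 0 (Wf u h m) x - m 0 * pd 1 (Wf u h m) x
  rw [hσ 1, hσ 0, pd_cmul hWs' (m 1) 0 x, pd_cmul hWs' (m 0) 1 x]

include hu in
lemma vort_eq (hdiv : ∀ x, pd 0 (fun y => u y 0) x + pd 1 (fun y => u y 1) x = 0) :
    ∀ x, m 1 * pd 0 (omg u) x - m 0 * pd 1 (omg u) x = lapU u m x := by
  intro x
  have hdiv0 : pd 0 (fun y => u y 0) = fun x => -(pd 1 (fun y => u y 1) x) :=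
    funext fun x => by have := hdiv x; linarith
  have hdiv1 : pd 1 (fun y => u y 1) = fun x => -(pd 0 (fun y => u y 0) x) :=
    funext fun x => by have := hdiv x; linarith
  have A : pd 0 (pd 1 (fun y => u y 0)) x = -(pd 1 (pd 1 (fun y => u y 1)) x) := by
    rw [pd_comm (hu 0) 0 1 x, hdiv0, pd_neg _ 1 x]
  have B : pd 1 (pd 0 (fun y => u y 1)) x = -(pd 0 (pd 0 (fun y => u y 0)) x) := by
    rw [pd_comm (hu 1) 1 0 x, hdiv1, pd_neg _ 0 x]
  have eo : ∀ k : Fin 2, pd k (omg u) x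
      = pd k (pd 0 (fun y => u y 1)) x - pd k (pd 1 (fun y => u y 0)) x := by
    intro k
    have e : omg u = fun x => (pd 0 (fun y => u y 1)) x - (pd 1 (fun y => u y 0)) x := rfl
    rw [e, pd_sub (pd_contDiff (hu 1) 0) (pd_contDiff (hu 0) 1) k x]
  have eU : ∀ k : Fin 2, pd k (pd k (Uf u m)) x
      = m 0 * pd k (pd k (fun y => u y 0)) x + m 1 * pd k (pd k (fun y => u y 1)) x := by
    intro k
    have e : pd k (Uf u m)
        = fun y => (fun z => m 0 * pd k (fun w => u w 0) z) y + (fun z => m 1 * pd k (fun w => u w 1) z) y :=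
      funext fun y => pdU u m hu k y
    rw [e, pd_add (contDiff_const.mul (pd_contDiff (hu 0) k))
        (contDiff_const.mul (pd_contDiff (hu 1) k)) k x,
      pd_cmul (pd_contDiff (hu 0) k) (m 0) k x, pd_cmul (pd_contDiff (hu 1) k) (m 1) k x]
  simp only [lapU, eU 0, eU 1, eo 0, eo 1, A, B]
  ring

include hu in
lemma lap_eq : ∀ x, m 0 * pd 0 (lapU u m) x + m 1 * pd 1 (lapU u m) x = lap (DQ u m) x := by
  intro x
  have hUs' := hUs u m hu
  have h0 := pd_contDiff hUs' 0
  have h1 := pd_contDiff hUs' 1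
  have C1 : pd 0 (pd 1 (pd 1 (Uf u m))) x = pd 1 (pd 1 (pd 0 (Uf u m))) x := by
    rw [pd_comm h1 0 1 x]
    have e : pd 0 (pd 1 (Uf u m)) = pd 1 (pd 0 (Uf u m)) :=
      funext fun y => pd_comm hUs' 0 1 y
    rw [e]
  have C2 : pd 1 (pd 0 (pd 0 (Uf u m))) x = pd 0 (pd 0 (pd 1 (Uf u m))) x := by
    rw [pd_comm h0 1 0 x]
    have e : pd 1 (pd 0 (Uf u m)) = pd 0 (pd 1 (Uf u m)) :=
      funext fun y => pd_comm hUs' 1 0 y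
    rw [e]
  have eL : ∀ k : Fin 2, pd k (lapU u m) x
      = pd k (pd 0 (pd 0 (Uf u m))) x + pd k (pd 1 (pd 1 (Uf u m))) x := by
    intro k
    have e : lapU u m = fun y => (pd 0 (pd 0 (Uf u m))) y + (pd 1 (pd 1 (Uf u m))) y := rfl
    rw [e, pd_add (pd_contDiff h0 0) (pd_contDiff h1 1) k x]
  have eD : ∀ k : Fin 2, pd k (pd k (DQ u m)) x
      = m 0 * pd k (pd k (pd 0 (Uf u m))) x + m 1 * pd k (pd k (pd 1 (Uf u m))) x := by
    intro k
    have e1 : pd k (DQ u m)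
        = fun y => (fun z => m 0 * pd k (pd 0 (Uf u m)) z) y + (fun z => m 1 * pd k (pd 1 (Uf u m)) z) y := by
      funext y
      have e : DQ u m = fun z => (fun w => m 0 * pd 0 (Uf u m) w) z + (fun w => m 1 * pd 1 (Uf u m) w) z := rfl
      rw [e, pd_add (contDiff_const.mul h0) (contDiff_const.mul h1) k y,
        pd_cmul h0 (m 0) k y, pd_cmul h1 (m 1) k y]
    rw [e1, pd_add (contDiff_const.mul (pd_contDiff h0 k))
        (contDiff_const.mul (pd_contDiff h1 k)) k x,
      pd_cmul (pd_contDiff h0 k) (m 0) k x, pd_cmul (pd_contDiff h1 k) (m 1) k x]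
  have elap : lap (DQ u m) x = pd 0 (pd 0 (DQ u m)) x + pd 1 (pd 1 (DQ u m)) x := by
    simp [lap, Fin.sum_univ_two]
  rw [elap, eD 0, eD 1, eL 0, eL 1, C1, C2]
  ring

end computations

/-- Cancellation structure (C-Doi2D): for a smooth ℤ²-periodic divergence-free `u : ℝ² → ℝ²`,
a smooth ℤ²-periodic `h : ℝ² → ℝ`, and a unit vector `m ∈ ℝ²`, with
`ω = ∂₁u₂ − ∂₂u₁` and `q = ∑ᵢⱼ (∂ᵢuⱼ)mᵢmⱼ`:
`∫_{[0,1]²} ω·∇^⊥·(∇·(q·h·(m⊗m))) = ∫_{[0,1]²} Δq·q·h`. -/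
theorem viscous_stress_cancellation_H1 (u : (Fin 2 → ℝ) → Fin 2 → ℝ)
    (h : (Fin 2 → ℝ) → ℝ) (m : Fin 2 → ℝ)
    (hu : ∀ j, ContDiff ℝ (⊤ : ℕ∞) fun x => u x j)
    (huper : ∀ (x : Fin 2 → ℝ) (n : Fin 2 → ℤ) (j : Fin 2),
      u (x + fun k => (n k : ℝ)) j = u x j)
    (hdiv : ∀ x, pd 0 (fun y => u y 0) x + pd 1 (fun y => u y 1) x = 0)
    (hh : ContDiff ℝ (⊤ : ℕ∞) h)
    (hhper : ∀ (x : Fin 2 → ℝ) (n : Fin 2 → ℤ), h (x + fun k => (n k : ℝ)) = h x)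
    (hm : ∑ i, m i ^ 2 = 1) :
    ∫ x in Set.Icc (0 : Fin 2 → ℝ) 1,
        (pd 0 (fun y => u y 1) x - pd 1 (fun y => u y 0) x) *
          perpDivDiv (fun z => (qf u m z * h z) • vecMulVec m m) x
      = ∫ x in Set.Icc (0 : Fin 2 → ℝ) 1, lap (qf u m) x * qf u m x * h x := by
  rw [qf_eq u m hu]
  -- abbreviations for regularity facts
  have hWs' := hWs u h m hu hh
  have hWp' := hWp u h m hu huper hh hhper
  have hPs' := hPs u h m hu hh
  have hPp' := hPp u h m hu huper hh hhper
  have homgs' := homgs u hu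
  have homgp' := homgp u hu huper
  have hlapUs' := hlapUs u m hu
  have hlapUp' := hlapUp u m hu huper
  have cW : Continuous (Wf u h m) := hWs'.continuous
  have cP : Continuous (Pf u h m) := hPs'.continuous
  have comg : Continuous (omg u) := homgs'.continuous
  have clapU : Continuous (lapU u m) := hlapUs'.continuous
  -- Step 1: rewrite the left integrand
  have p1 : ∀ x, (pd 0 (fun y => u y 1) x - pd 1 (fun y => u y 0) x) *
      perpDivDiv (fun z => (DQ u m z * h z) • vecMulVec m m) x
        = m 1 * (omg u x * pd 0 (Wf u h m) x) - m 0 * (omg u x * pd 1 (Wf u h m) x) := by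
    intro x
    have e : (pd 0 (fun y => u y 1) x - pd 1 (fun y => u y 0) x) = omg u x := rfl
    rw [e, perp_eq u h m hu hh x]
    ring
  simp only [p1]
  rw [integral_sub
      (intOn (continuous_const.fun_mul (comg.fun_mul (pd_contDiff hWs' 0).continuous)))
      (intOn (continuous_const.fun_mul (comg.fun_mul (pd_contDiff hWs' 1).continuous))),
    integral_const_mul, integral_const_mul,
    ibp homgs' hWs' homgp' hWp' 0, ibp homgs' hWs' homgp' hWp' 1]
  -- Step 2: middle expression
  set I1 := ∫ x in Set.Icc (0 : Fin 2 → ℝ) 1, pd 0 (omg u) x * Wf u h m x with hI1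
  set I2 := ∫ x in Set.Icc (0 : Fin 2 → ℝ) 1, pd 1 (omg u) x * Wf u h m x with hI2
  set J0 := ∫ x in Set.Icc (0 : Fin 2 → ℝ) 1, lapU u m x * pd 0 (Pf u h m) x with hJ0
  set J1 := ∫ x in Set.Icc (0 : Fin 2 → ℝ) 1, lapU u m x * pd 1 (Pf u h m) x with hJ1
  -- left chain: M' := ∫ (m0*pd1ω - m1*pd0ω) * W
  have split1 : ∫ x in Set.Icc (0 : Fin 2 → ℝ) 1,
      (m 0 * pd 1 (omg u) x - m 1 * pd 0 (omg u) x) * Wf u h m x = m 0 * I2 - m 1 * I1 := by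
    have p2 : ∀ x, (m 0 * pd 1 (omg u) x - m 1 * pd 0 (omg u) x) * Wf u h m x
        = m 0 * (pd 1 (omg u) x * Wf u h m x) - m 1 * (pd 0 (omg u) x * Wf u h m x) := by
      intro x; ring
    simp only [p2]
    rw [integral_sub
        (intOn (continuous_const.fun_mul ((pd_contDiff homgs' 1).continuous.fun_mul cW)))
        (intOn (continuous_const.fun_mul ((pd_contDiff homgs' 0).continuous.fun_mul cW))),
      integral_const_mul, integral_const_mul]
  have split2 : ∫ x in Set.Icc (0 : Fin 2 → ℝ) 1,
      (m 0 * pd 1 (omg u) x - m 1 * pd 0 (omg u) x) * Wf u h m x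
        = m 0 * (-J0) + m 1 * (-J1) := by
    have vw : ∀ x, (m 0 * pd 1 (omg u) x - m 1 * pd 0 (omg u) x) * Wf u h m x
        = m 0 * (-(lapU u m x * pd 0 (Pf u h m) x)) + m 1 * (-(lapU u m x * pd 1 (Pf u h m) x)) := by
      intro x
      have hv := vort_eq u m hu hdiv x
      have eW : Wf u h m x = m 0 * pd 0 (Pf u h m) x + m 1 * pd 1 (Pf u h m) x := rfl
      rw [eW, ← hv]
      ring
    simp only [vw]
    rw [integral_add
        (intOn (continuous_const.fun_mul ((clapU.fun_mul (pd_contDiff hPs' 0).continuous)).fun_neg))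
        (intOn (continuous_const.fun_mul ((clapU.fun_mul (pd_contDiff hPs' 1).continuous)).fun_neg)),
      integral_const_mul, integral_const_mul, integral_neg, integral_neg]
  -- right chain
  have pr : ∀ x, lap (DQ u m) x * DQ u m x * h x
      = m 0 * (pd 0 (lapU u m) x * Pf u h m x) + m 1 * (pd 1 (lapU u m) x * Pf u h m x) := by
    intro x
    rw [← lap_eq u m hu x]
    have eP : Pf u h m x = DQ u m x * h x := rfl
    rw [eP]
    ring
  simp only [pr]
  rw [integral_add
      (intOn (continuous_const.fun_mul ((pd_contDiff hlapUs' 0).continuous.fun_mul cP)))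
      (intOn (continuous_const.fun_mul ((pd_contDiff hlapUs' 1).continuous.fun_mul cP))),
    integral_const_mul, integral_const_mul]
  have ib0 := ibp hlapUs' hPs' hlapUp' hPp' 0
  have ib1 := ibp hlapUs' hPs' hlapUp' hPp' 1
  rw [← hJ0] at ib0
  rw [← hJ1] at ib1
  have lhs_eq : m 1 * -I1 - m 0 * -I2 = m 0 * (-J0) + m 1 * (-J1) := by
    rw [← split2, split1]; ring
  rw [lhs_eq, ib0, ib1]
  ring
end

section
/- Let T > 0. Let F : [0,T] → ℝ be continuously differentiable with F ≥ 0 and F(0) = 0, let G : [0,T] → ℝ be continuous with G ≥ 0, and let φ : [0,T] → ℝ be nonnegative and Lebesgue integrable. Suppose that for almost every t ∈ (0,T), F′(t) + G(t) ≤ φ(t)·( F(t) + ∫₀ᵗ G(s) ds ). Then F(t) = 0 and G(t) = 0 for all t ∈ [0,T]. -/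
open MeasureTheory intervalIntegral

section GronwallAux
open Set

lemma uIcc_sub_Icc {T a b : ℝ} (hT : 0 ≤ T) (ha : a ∈ Icc (0:ℝ) T) (hb : b ∈ Icc (0:ℝ) T) :
    Set.uIcc a b ⊆ Set.uIcc 0 T := by
  rw [Set.uIcc, Set.uIcc_of_le hT]
  exact Set.Icc_subset_Icc (le_inf ha.1 hb.1) (sup_le ha.2 hb.2)

lemma icc_of_uIcc {T a b : ℝ} (hT : 0 ≤ T) (ha : a ∈ Icc (0:ℝ) T) (hb : b ∈ Icc (0:ℝ) T) :
    Set.uIcc a b ⊆ Set.Icc 0 T := by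
  rw [← Set.uIcc_of_le hT]; exact uIcc_sub_Icc hT ha hb

lemma gronwall_core (T : ℝ) (hT : 0 < T) (H φ : ℝ → ℝ)
    (hHcont : ContinuousOn H (Set.Icc 0 T))
    (hHnonneg : ∀ t ∈ Set.Icc (0:ℝ) T, 0 ≤ H t)
    (hφint : IntervalIntegrable φ volume 0 T)
    (hkey : ∀ t ∈ Set.Icc (0:ℝ) T, H t ≤ ∫ s in (0:ℝ)..t, φ s * H s) :
    ∀ t ∈ Set.Icc (0:ℝ) T, H t = 0 := by
  have hint : ∀ a b : ℝ, a ∈ Icc (0:ℝ) T → b ∈ Icc (0:ℝ) T →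
      IntervalIntegrable (fun s => φ s * H s) volume a b := fun a b ha hb =>
    (hφint.mono_set (uIcc_sub_Icc hT.le ha hb)).mul_continuousOn
      (hHcont.mono (icc_of_uIcc hT.le ha hb))
  have h0T : (0:ℝ) ∈ Icc (0:ℝ) T := ⟨le_refl 0, hT.le⟩
  have hTT : T ∈ Icc (0:ℝ) T := ⟨hT.le, le_refl T⟩
  set S : Set ℝ := {t | t ∈ Icc (0:ℝ) T ∧ ∀ s ∈ Icc (0:ℝ) t, H s = 0} with hS
  have hH0 : H 0 = 0 := le_antisymm (by simpa using hkey 0 h0T) (hHnonneg 0 h0T)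
  have h0S : 0 ∈ S := ⟨h0T, fun s hs => by
    have : s = 0 := le_antisymm hs.2 hs.1
    rw [this]; exact hH0⟩
  have hbdd : BddAbove S := ⟨T, fun x hx => hx.1.2⟩
  have hne : S.Nonempty := ⟨0, h0S⟩
  set τ := sSup S with hτ
  have hτT : τ ≤ T := csSup_le hne (fun x hx => hx.1.2)
  have h0τ : 0 ≤ τ := le_csSup hbdd h0S
  have hτIcc : τ ∈ Icc (0:ℝ) T := ⟨h0τ, hτT⟩
  have hzero_lt : ∀ s ∈ Ico (0:ℝ) τ, H s = 0 := by
    intro s hs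
    obtain ⟨x, hxS, hsx⟩ := exists_lt_of_lt_csSup hne hs.2
    exact hxS.2 s ⟨hs.1, hsx.le⟩
  have hint_zero : ∀ u ∈ Icc (0:ℝ) τ, (∫ s in (0:ℝ)..u, φ s * H s) = 0 := by
    intro u hu
    have hae : ∀ᵐ s ∂(volume : Measure ℝ), s ∈ Set.uIoc (0:ℝ) u →
        φ s * H s = 0 := by
      have hne' : ∀ᵐ s ∂(volume : Measure ℝ), s ≠ τ := by
        simpa [ae_iff] using measure_singleton (μ := (volume : Measure ℝ)) τ
      filter_upwards [hne'] with s hsne hs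
      rw [Set.uIoc_of_le hu.1] at hs
      have : H s = 0 := by
        rcases lt_or_eq_of_le (hs.2.trans hu.2) with h | h
        · exact hzero_lt s ⟨hs.1.le, h⟩
        · exact absurd h hsne
      simp [this]
    calc (∫ s in (0:ℝ)..u, φ s * H s) = ∫ s in (0:ℝ)..u, (0:ℝ) :=
          intervalIntegral.integral_congr_ae hae
      _ = 0 := by simp
  have hτ0 : H τ = 0 := by
    refine le_antisymm ?_ (hHnonneg τ hτIcc)
    have := hkey τ hτIcc
    rwa [hint_zero τ ⟨h0τ, le_refl τ⟩] at this
  have hτS : τ ∈ S := ⟨hτIcc, fun s hs => by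
    rcases lt_or_eq_of_le hs.2 with h | h
    · exact hzero_lt s ⟨hs.1, h⟩
    · rw [h]; exact hτ0⟩
  have hτeq : τ = T := by
    by_contra hneq
    have hτlt : τ < T := lt_of_le_of_ne hτT hneq
    have hφabs : IntervalIntegrable (fun s => |φ s|) volume τ T :=
      (hφint.mono_set (uIcc_sub_Icc hT.le hτIcc hTT)).abs
    have hcont : ContinuousWithinAt (fun x => ∫ s in τ..x, |φ s|) (Icc τ T) τ := by
      apply continuousWithinAt_primitive (measure_singleton τ)
      simpa [min_self, max_eq_right hτT] using hφabs
    have hlt : (fun x => ∫ s in τ..x, |φ s|) τ < 1/2 := by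
      simp only [intervalIntegral.integral_same]; norm_num
    have hev : ∀ᶠ x in nhdsWithin τ (Icc τ T), (∫ s in τ..x, |φ s|) < 1/2 :=
      hcont (Iio_mem_nhds hlt)
    have hneb : (nhdsWithin τ (Ioo τ T)).NeBot := by
      apply mem_closure_iff_nhdsWithin_neBot.mp
      rw [closure_Ioo hτlt.ne]
      exact ⟨le_refl τ, hτlt.le⟩
    have hev' : ∀ᶠ x in nhdsWithin τ (Ioo τ T), (∫ s in τ..x, |φ s|) < 1/2 :=
      hev.filter_mono (nhdsWithin_mono τ Ioo_subset_Icc_self)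
    obtain ⟨t₁, ht₁int, ht₁mem⟩ := (hev'.and eventually_mem_nhdsWithin).exists
    -- t₁ ∈ (τ, T), ∫_τ^{t₁} |φ| < 1/2
    have ht₁Icc : t₁ ∈ Icc (0:ℝ) T := ⟨h0τ.trans ht₁mem.1.le, ht₁mem.2.le⟩
    have hsub : Icc τ t₁ ⊆ Icc (0:ℝ) T := Icc_subset_Icc h0τ ht₁mem.2.le
    obtain ⟨tstar, htsmem, htsmax⟩ :=
      isCompact_Icc.exists_isMaxOn (nonempty_Icc.mpr ht₁mem.1.le) (hHcont.mono hsub)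
    set M := H tstar with hM
    have hM0 : 0 ≤ M := hτ0 ▸ htsmax (left_mem_Icc.mpr ht₁mem.1.le)
    have hMbound : ∀ t ∈ Icc τ t₁, H t ≤ 1/2 * M := by
      intro t ht
      have htIcc : t ∈ Icc (0:ℝ) T := hsub ht
      have h1 : H t ≤ ∫ s in (0:ℝ)..t, φ s * H s := hkey t htIcc
      have hsplit : (∫ s in (0:ℝ)..t, φ s * H s)
          = (∫ s in (0:ℝ)..τ, φ s * H s) + ∫ s in τ..t, φ s * H s :=
        (intervalIntegral.integral_add_adjacent_intervals
          (hint 0 τ h0T hτIcc) (hint τ t hτIcc htIcc)).symm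
      rw [hsplit, hint_zero τ ⟨h0τ, le_refl τ⟩, zero_add] at h1
      have h2 : (∫ s in τ..t, φ s * H s) ≤ ∫ s in τ..t, |φ s| * M := by
        apply intervalIntegral.integral_mono_on ht.1 (hint τ t hτIcc htIcc)
          (((hφint.mono_set (uIcc_sub_Icc hT.le hτIcc htIcc)).abs).mul_const M)
        intro s hs
        have hsIcc : s ∈ Icc (0:ℝ) T := hsub ⟨hs.1, hs.2.trans ht.2⟩
        calc φ s * H s ≤ |φ s| * H s :=
              mul_le_mul_of_nonneg_right (le_abs_self _) (hHnonneg s hsIcc)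
          _ ≤ |φ s| * M :=
              mul_le_mul_of_nonneg_left (htsmax ⟨hs.1, hs.2.trans ht.2⟩) (abs_nonneg _)
      have h3 : (∫ s in τ..t, |φ s| * M) ≤ ∫ s in τ..t₁, |φ s| * M := by
        have hadj : (∫ s in τ..t₁, |φ s| * M)
            = (∫ s in τ..t, |φ s| * M) + ∫ s in t..t₁, |φ s| * M :=
          (intervalIntegral.integral_add_adjacent_intervals
            (((hφint.mono_set (uIcc_sub_Icc hT.le hτIcc htIcc)).abs).mul_const M)
            (((hφint.mono_set (uIcc_sub_Icc hT.le htIcc ht₁Icc)).abs).mul_const M)).symm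
        have hpos : 0 ≤ ∫ s in t..t₁, |φ s| * M :=
          intervalIntegral.integral_nonneg ht.2
            (fun s _ => mul_nonneg (abs_nonneg _) hM0)
        linarith [hadj]
      have h4 : (∫ s in τ..t₁, |φ s| * M) = (∫ s in τ..t₁, |φ s|) * M :=
        intervalIntegral.integral_mul_const M _
      have h5 : (∫ s in τ..t₁, |φ s|) * M ≤ 1/2 * M :=
        mul_le_mul_of_nonneg_right ht₁int.le hM0
      linarith
    have hMle : M ≤ 0 := by
      have := hMbound tstar htsmem
      linarith
    have ht₁S : t₁ ∈ S := by
      refine ⟨ht₁Icc, fun s hs => ?_⟩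
      rcases le_or_gt s τ with h | h
      · exact hτS.2 s ⟨hs.1, h⟩
      · refine le_antisymm ?_ (hHnonneg s ⟨hs.1, hs.2.trans ht₁Icc.2⟩)
        have := hMbound s ⟨h.le, hs.2⟩
        linarith
    have : t₁ ≤ τ := le_csSup hbdd ht₁S
    exact absurd ht₁mem.1 (not_lt.mpr this)
  intro t ht
  exact hτS.2 t ⟨ht.1, hτeq ▸ ht.2⟩

end GronwallAux

/-- Grönwall-type lemma for the uniqueness proof: if `F` is `C¹` on `[0,T]` with `F ≥ 0`,
`F 0 = 0`, `G` is continuous and nonnegative, `φ` is nonnegative and integrable, and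
`F′(t) + G(t) ≤ φ(t)(F(t) + ∫₀ᵗ G)` for a.e. `t ∈ (0,T)`, then `F ≡ 0` and `G ≡ 0`
on `[0,T]`. -/
theorem gronwall_uniqueness (T : ℝ) (hT : 0 < T) (F F' G φ : ℝ → ℝ)
    (hderiv : ∀ t ∈ Set.Icc (0 : ℝ) T, HasDerivAt F (F' t) t)
    (hF'cont : ContinuousOn F' (Set.Icc 0 T))
    (hFnonneg : ∀ t ∈ Set.Icc (0 : ℝ) T, 0 ≤ F t)
    (hF0 : F 0 = 0)
    (hGcont : ContinuousOn G (Set.Icc 0 T))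
    (hGnonneg : ∀ t ∈ Set.Icc (0 : ℝ) T, 0 ≤ G t)
    (hφnonneg : ∀ t ∈ Set.Icc (0 : ℝ) T, 0 ≤ φ t)
    (hφint : IntervalIntegrable φ volume 0 T)
    (hineq : ∀ᵐ t ∂(volume : Measure ℝ), t ∈ Set.Ioo (0 : ℝ) T →
      F' t + G t ≤ φ t * (F t + ∫ s in (0 : ℝ)..t, G s)) :
    ∀ t ∈ Set.Icc (0 : ℝ) T, F t = 0 ∧ G t = 0 := by
  open Set in

  -- clamped version of G, continuous on all of ℝ
  set c : ℝ → ℝ := fun s => max 0 (min s T) with hc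
  have hcCont : Continuous c := continuous_const.max (continuous_id.min continuous_const)
  have hcmem : ∀ s, c s ∈ Set.Icc (0:ℝ) T := fun s =>
    ⟨le_max_left _ _, max_le hT.le (min_le_right _ _)⟩
  have hceq : ∀ s ∈ Set.Icc (0:ℝ) T, c s = s := fun s hs => by
    rw [hc]; simp [min_eq_left hs.2, max_eq_right hs.1]
  set Gc : ℝ → ℝ := fun s => G (c s) with hGc
  have hGcCont : Continuous Gc := hGcont.comp_continuous hcCont hcmem
  have hGceq : ∀ s ∈ Set.Icc (0:ℝ) T, Gc s = G s := fun s hs => by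
    rw [hGc]; simp [hceq s hs]
  have hGcnonneg : ∀ s, 0 ≤ Gc s := fun s => hGnonneg _ (hcmem s)
  -- the primitive of Gc
  set J : ℝ → ℝ := fun t => ∫ s in (0:ℝ)..t, Gc s with hJ
  have hJd : ∀ t : ℝ, HasDerivAt J (Gc t) t := by
    intro t
    exact intervalIntegral.integral_hasDerivAt_right
      (hGcCont.intervalIntegrable 0 t)
      (hGcCont.stronglyMeasurableAtFilter _ _)
      hGcCont.continuousAt
  have hJG : ∀ t ∈ Set.Icc (0:ℝ) T, J t = ∫ s in (0:ℝ)..t, G s := by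
    intro t ht
    apply intervalIntegral.integral_congr
    intro s hs
    exact hGceq s (icc_of_uIcc hT.le ⟨le_refl 0, hT.le⟩ ht hs)
  set H : ℝ → ℝ := fun t => F t + J t with hH
  have hFcont : ContinuousOn F (Set.Icc 0 T) := fun t ht =>
    (hderiv t ht).continuousAt.continuousWithinAt
  have hHcont : ContinuousOn H (Set.Icc 0 T) :=
    hFcont.add (fun t _ => (hJd t).continuousAt.continuousWithinAt)
  have hJnonneg : ∀ t ∈ Set.Icc (0:ℝ) T, 0 ≤ J t := fun t ht =>
    intervalIntegral.integral_nonneg ht.1 (fun s _ => hGcnonneg s)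
  have hHnonneg : ∀ t ∈ Set.Icc (0:ℝ) T, 0 ≤ H t := fun t ht =>
    add_nonneg (hFnonneg t ht) (hJnonneg t ht)
  have hH0 : H 0 = 0 := by simp [hH, hJ, hF0]
  -- the key integral inequality
  have hkey : ∀ t ∈ Set.Icc (0:ℝ) T, H t ≤ ∫ s in (0:ℝ)..t, φ s * H s := by
    intro t ht
    have hHd : ∀ s ∈ Set.uIcc (0:ℝ) t, HasDerivAt H (F' s + Gc s) s := fun s hs =>
      (hderiv s (icc_of_uIcc hT.le ⟨le_refl 0, hT.le⟩ ht hs)).add (hJd s)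
    have hintd : IntervalIntegrable (fun s => F' s + Gc s) volume 0 t :=
      ((hF'cont.mono (icc_of_uIcc hT.le ⟨le_refl 0, hT.le⟩ ht)).intervalIntegrable).add
        (hGcCont.intervalIntegrable 0 t)
    have hFTC : (∫ s in (0:ℝ)..t, (F' s + Gc s)) = H t - H 0 :=
      intervalIntegral.integral_eq_sub_of_hasDerivAt hHd hintd
    have hφH : IntervalIntegrable (fun s => φ s * H s) volume 0 t :=
      (hφint.mono_set (uIcc_sub_Icc hT.le ⟨le_refl 0, hT.le⟩ ht)).mul_continuousOn
        (hHcont.mono (icc_of_uIcc hT.le ⟨le_refl 0, hT.le⟩ ht))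
    have hmono : (∫ s in (0:ℝ)..t, (F' s + Gc s)) ≤ ∫ s in (0:ℝ)..t, φ s * H s := by
      apply intervalIntegral.integral_mono_ae_restrict ht.1 hintd hφH
      have hne0 : ∀ᵐ s ∂(volume : Measure ℝ), s ≠ 0 := by
        simpa [ae_iff] using measure_singleton (μ := (volume : Measure ℝ)) (0:ℝ)
      have hneT : ∀ᵐ s ∂(volume : Measure ℝ), s ≠ T := by
        simpa [ae_iff] using measure_singleton (μ := (volume : Measure ℝ)) T
      rw [Filter.EventuallyLE, ae_restrict_iff' measurableSet_Icc]
      filter_upwards [hineq, hne0, hneT] with s hs hs0 hsT hsIcc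
      have hsIoo : s ∈ Set.Ioo (0:ℝ) T :=
        ⟨lt_of_le_of_ne hsIcc.1 (Ne.symm hs0),
         lt_of_le_of_ne (hsIcc.2.trans ht.2) hsT⟩
      have hsIcc' : s ∈ Set.Icc (0:ℝ) T := ⟨hsIoo.1.le, hsIoo.2.le⟩
      have := hs hsIoo
      show F' s + Gc s ≤ φ s * (F s + J s)
      rw [hGceq s hsIcc', hJG s hsIcc']
      exact this
    rw [hFTC, hH0, sub_zero] at hmono
    exact hmono
  have hHzero : ∀ t ∈ Set.Icc (0:ℝ) T, H t = 0 :=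
    gronwall_core T hT H φ hHcont hHnonneg hφint hkey
  -- extract F = 0 and J = 0
  have hFzero : ∀ t ∈ Set.Icc (0:ℝ) T, F t = 0 := by
    intro t ht
    have h1 := hHzero t ht
    have h2 := hFnonneg t ht
    have h3 := hJnonneg t ht
    simp only [hH] at h1
    linarith
  have hJzero : ∀ t ∈ Set.Icc (0:ℝ) T, J t = 0 := by
    intro t ht
    have h1 := hHzero t ht
    have h2 := hFnonneg t ht
    have h3 := hJnonneg t ht
    simp only [hH] at h1
    linarith
  -- G = 0 on the open interval via differentiation
  have hGzeroIoo : ∀ t ∈ Set.Ioo (0:ℝ) T, G t = 0 := by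
    intro t ht
    have hIccNhds : Set.Icc (0:ℝ) T ∈ nhds t := Icc_mem_nhds ht.1 ht.2
    have hJeq : J =ᶠ[nhds t] (fun _ => (0:ℝ)) := by
      filter_upwards [hIccNhds] with s hs
      exact hJzero s hs
    have hd0 : HasDerivAt J 0 t := by
      have : HasDerivAt (fun _ => (0:ℝ)) 0 t := hasDerivAt_const t 0
      exact this.congr_of_eventuallyEq hJeq
    have : Gc t = 0 := (hJd t).unique hd0
    rwa [hGceq t ⟨ht.1.le, ht.2.le⟩] at this
  -- endpoints by continuity
  have hGzero : ∀ t ∈ Set.Icc (0:ℝ) T, G t = 0 := by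
    intro t ht
    rcases eq_or_lt_of_le ht.1 with h0 | h0
    · -- t = 0
      have hneb : (nhdsWithin (0:ℝ) (Set.Ioo (0:ℝ) T)).NeBot := by
        apply mem_closure_iff_nhdsWithin_neBot.mp
        rw [closure_Ioo hT.ne]
        exact ⟨le_refl 0, hT.le⟩
      have h1 : Filter.Tendsto G (nhdsWithin 0 (Set.Ioo (0:ℝ) T)) (nhds (G 0)) :=
        (hGcont 0 ⟨le_refl 0, hT.le⟩).mono_left
          (nhdsWithin_mono _ Set.Ioo_subset_Icc_self)
      have h2 : Filter.Tendsto G (nhdsWithin 0 (Set.Ioo (0:ℝ) T)) (nhds 0) := by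
        apply Filter.Tendsto.congr' _ tendsto_const_nhds
        filter_upwards [eventually_mem_nhdsWithin] with s hs
        exact (hGzeroIoo s hs).symm
      rw [← h0]
      exact tendsto_nhds_unique h1 h2
    · rcases eq_or_lt_of_le ht.2 with hTk | hTk
      · -- t = T
        have hneb : (nhdsWithin T (Set.Ioo (0:ℝ) T)).NeBot := by
          apply mem_closure_iff_nhdsWithin_neBot.mp
          rw [closure_Ioo hT.ne]
          exact ⟨hT.le, le_refl T⟩
        have h1 : Filter.Tendsto G (nhdsWithin T (Set.Ioo (0:ℝ) T)) (nhds (G T)) :=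
          (hGcont T ⟨hT.le, le_refl T⟩).mono_left
            (nhdsWithin_mono _ Set.Ioo_subset_Icc_self)
        have h2 : Filter.Tendsto G (nhdsWithin T (Set.Ioo (0:ℝ) T)) (nhds 0) := by
          apply Filter.Tendsto.congr' _ tendsto_const_nhds
          filter_upwards [eventually_mem_nhdsWithin] with s hs
          exact (hGzeroIoo s hs).symm
        rw [hTk]
        exact tendsto_nhds_unique h1 h2
      · exact hGzeroIoo t ⟨h0, hTk⟩
  exact fun t ht => ⟨hFzero t ht, hGzero t ht⟩
end
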